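/- (Maximal process of a BMO process is BMO.) Let (V_t)_{t∈[0,τ]} be a BMO process and define its maximal process V*_t := sup_{s≤t} |V_s − V_0|. Then V* is a BMO process and ρ_{s,t}(V*) ≤ 11 ρ_{s,t}(V) for all 0 ≤ s ≤ t ≤ τ. -/

import Mathlib

open MeasureTheory ProbabilityTheory Filter Topology Set
open scoped ENNReal NNReal

noncomputable section

/-- Left limit of the path `t ↦ V t ω` at time `s`, with the convention `V_{0-} := V_0`. -/
def llim {Ω : Type*} (V : ℝ → Ω → ℝ) (s : ℝ) (ω : Ω) : ℝ :=
  if s ≤ 0 then V 0 ω else limUnder (nhdsWithin s (Set.Iio s)) fun t => V t ω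

/-- A right-continuous adapted-in-time path structure: right continuous with left limits (RCLL). -/
structure IsRCLL {Ω : Type*} (V : ℝ → Ω → ℝ) : Prop where
  rightCont : ∀ ω t, ContinuousWithinAt (fun u => V u ω) (Set.Ici t) t
  leftLimExists : ∀ ω t, (0:ℝ) < t →
    ∃ l : ℝ, Filter.Tendsto (fun u => V u ω) (nhdsWithin t (Set.Iio t)) (nhds l)

/-- The conditional expectation `E[f | m']` of a (nonnegative) function `f`, realized as an
`ℝ≥0∞`-valued integral against the conditional expectation kernel; this gives an honest meaning
to `E_{m'} f` even when `f` is not integrable. -/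
def condE {Ω : Type*} {mΩ : MeasurableSpace Ω} [StandardBorelSpace Ω]
    (μ : Measure Ω) [IsFiniteMeasure μ] (m' : MeasurableSpace Ω) (f : Ω → ℝ) (ω : Ω) : ℝ≥0∞ :=
  ∫⁻ y, ENNReal.ofReal (f y) ∂(condExpKernel (mΩ := mΩ) μ m' ω)

/-- The modulus of mean oscillation `ρ_{s,t}(V)`: the supremum over all pairs of stopping times
`s ≤ S ≤ T ≤ t` of `‖E_S |V_T - V_{S-}|‖_∞`. -/
def bmoRho {Ω : Type*} {mΩ : MeasurableSpace Ω} [StandardBorelSpace Ω]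
    (μ : Measure Ω) [IsFiniteMeasure μ] (ℱ : Filtration ℝ mΩ) (V : ℝ → Ω → ℝ)
    (s t : ℝ) : ℝ≥0∞ :=
  ⨆ (S : Ω → ℝ) (T : Ω → ℝ) (hS : IsStoppingTime ℱ (fun ω => (S ω : WithTop ℝ)))
    (_ : IsStoppingTime ℱ (fun ω => (T ω : WithTop ℝ)))
    (_ : ∀ ω, s ≤ S ω) (_ : ∀ ω, S ω ≤ T ω) (_ : ∀ ω, T ω ≤ t),
    essSup (condE μ hS.measurableSpace fun y => |V (T y) y - llim V (S y) y|) μ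

/-- `κ_{s,t}(V) = lim_{h ↓ 0} sup { ρ_{u,v}(V) : s ≤ u ≤ v ≤ t, v - u ≤ h }`. -/
def bmoKappa {Ω : Type*} {mΩ : MeasurableSpace Ω} [StandardBorelSpace Ω]
    (μ : Measure Ω) [IsFiniteMeasure μ] (ℱ : Filtration ℝ mΩ) (V : ℝ → Ω → ℝ)
    (s t : ℝ) : ℝ≥0∞ :=
  ⨅ (h : ℝ) (_ : 0 < h),
    ⨆ (u : ℝ) (v : ℝ) (_ : s ≤ u) (_ : u ≤ v) (_ : v ≤ t) (_ : v - u ≤ h),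
      bmoRho μ ℱ V u v

/-- A process of bounded mean oscillation (BMO) on `[0, τ]`. -/
structure IsBMO {Ω : Type*} {mΩ : MeasurableSpace Ω} [StandardBorelSpace Ω]
    (μ : Measure Ω) [IsFiniteMeasure μ] (ℱ : Filtration ℝ mΩ) (τ : ℝ)
    (V : ℝ → Ω → ℝ) : Prop where
  adapted : Adapted ℱ V
  rcll : IsRCLL V
  finite : bmoRho μ ℱ V 0 τ < ⊤

/-- A process of vanishing mean oscillation (VMO) on `[0, τ]`. -/
structure IsVMO {Ω : Type*} {mΩ : MeasurableSpace Ω} [StandardBorelSpace Ω]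
    (μ : Measure Ω) [IsFiniteMeasure μ] (ℱ : Filtration ℝ mΩ) (τ : ℝ)
    (V : ℝ → Ω → ℝ) : Prop where
  bmo : IsBMO μ ℱ τ V
  vanishing : bmoKappa μ ℱ V 0 τ = 0

/-- `w_{s,t}(V) = ([V]_{vmo^{p\text{-}var};[s,t]})^p`, the supremum over all partitions
`s = π_0 ≤ π_1 ≤ ⋯ ≤ π_n = t` of `∑_i ρ_{π_i, π_{i+1}}(V)^p`. -/
def pvarW {Ω : Type*} {mΩ : MeasurableSpace Ω} [StandardBorelSpace Ω]
    (μ : Measure Ω) [IsFiniteMeasure μ] (ℱ : Filtration ℝ mΩ) (V : ℝ → Ω → ℝ)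
    (p : ℝ) (s t : ℝ) : ℝ≥0∞ :=
  ⨆ (n : ℕ) (π : Fin (n + 1) → ℝ) (_ : Monotone π) (_ : π 0 = s) (_ : π (Fin.last n) = t),
    ∑ i : Fin n, bmoRho μ ℱ V (π i.castSucc) (π i.succ) ^ p

/-- A VMO process with modulus of mean oscillation of finite `p`-variation, i.e. `vmo^{p-var}`. -/
structure IsVMOpVar {Ω : Type*} {mΩ : MeasurableSpace Ω} [StandardBorelSpace Ω]
    (μ : Measure Ω) [IsFiniteMeasure μ] (ℱ : Filtration ℝ mΩ) (τ : ℝ) (p : ℝ)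
    (V : ℝ → Ω → ℝ) : Prop where
  vmo : IsVMO μ ℱ τ V
  finiteVar : pvarW μ ℱ V p 0 τ < ⊤

/-- The `vmo^α` seminorm `[V]_{vmo^α;[0,τ]} = sup_{0 ≤ s < t ≤ τ} ρ_{s,t}(V) / (t-s)^α`. -/
def vmoAlphaNorm {Ω : Type*} {mΩ : MeasurableSpace Ω} [StandardBorelSpace Ω]
    (μ : Measure Ω) [IsFiniteMeasure μ] (ℱ : Filtration ℝ mΩ) (τ : ℝ) (α : ℝ)
    (V : ℝ → Ω → ℝ) : ℝ≥0∞ :=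
  ⨆ (s : ℝ) (t : ℝ) (_ : 0 ≤ s) (_ : s < t) (_ : t ≤ τ),
    bmoRho μ ℱ V s t / ENNReal.ofReal ((t - s) ^ α)

/-!
The increment `V*_T - V*_{S-}` of the maximal process is at most the oscillation
`M_{S,T} = sup_{r ∈ [S, T]} |V_r - V_{S-}|`, so it suffices to show `E_S M_{S,T} ≤ 8ρ` for
`ρ > ρ_{s,t}(V)`. Let `R` be the first time after `S` at which `|V_R - V_{S-}| ≥ 2ρ`. Then
`M_{S,T} ≤ 2ρ + (|V_R - V_{S-}| / 2ρ) M_{R,T} + |V_{R-} - V_{S-}|`, and conditioning on `F_R` and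
then on `F_S` shows that a bound `c` on `E_S M_{S,T}`, uniform in `S`, improves to
`2ρ + c/2 + 2ρ`; iterating gives `8ρ`. For a first bound to exist and for `R` to be a stopping
time, `M` is taken over finitely many rational times and truncated at a level `b`; monotone
convergence removes both restrictions.
-/

lemma isBounded_image_of_isLocallyBoundedOn_of_isCompact {X Y : Type*} [TopologicalSpace X]
    [Bornology Y] {s : Set X} (hs : IsCompact s) {f : X → Y}
    (hf : ∀ x ∈ s, ∃ t ∈ 𝓝[s] x, Bornology.IsBounded (f '' t)) :
    Bornology.IsBounded (f '' s) :=
  hs.induction_on (by simp) (fun _ _ hst ht => ht.subset (image_mono hst))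
    (fun _ _ hs ht => by rw [image_union]; exact hs.union ht) hf

lemma le_of_forall_rat_clip {f : ℝ → ℝ} (hf : ∀ r, ContinuousWithinAt f (Ici r) r)
    {S T L : ℝ} (h : ∀ q : ℚ, f (min (max (q : ℝ) S) T) ≤ L) {r : ℝ} (hr : r ∈ Icc S T) :
    f r ≤ L := by
  rcases hr.2.eq_or_lt with rfl | hrT
  · obtain ⟨q, hq⟩ := exists_rat_gt r
    simpa [min_eq_right (hq.le.trans (le_max_left _ _))] using h q
  · have hclos : r ∈ closure (Ioo r T ∩ range ((↑) : ℚ → ℝ)) :=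
      closure_minimal (Rat.denseRange_cast.open_subset_closure_inter isOpen_Ioo)
        isClosed_closure (by rw [closure_Ioo hrT.ne]; exact left_mem_Icc.2 hrT.le)
    refine ContinuousWithinAt.closure_le hclos ((hf r).mono fun x hx => hx.1.1.le)
      continuousWithinAt_const ?_
    rintro _ ⟨hx, q, rfl⟩
    simpa [max_eq_left (hr.1.trans hx.1.le), min_eq_left hx.2.le] using h q

section Path

variable {Ω : Type*} {V : ℝ → Ω → ℝ}

lemma llim_of_nonpos {s : ℝ} (hs : s ≤ 0) (ω : Ω) : llim V s ω = V 0 ω := if_pos hs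

lemma llim_eq_of_tendsto {s l : ℝ} {ω : Ω} (hs : 0 < s)
    (h : Tendsto (V · ω) (𝓝[<] s) (𝓝 l)) : llim V s ω = l := by
  rw [llim, if_neg hs.not_ge]; exact h.limUnder_eq

lemma IsRCLL.tendsto_llim (hV : IsRCLL V) {s : ℝ} (hs : 0 < s) (ω : Ω) :
    Tendsto (V · ω) (𝓝[<] s) (𝓝 (llim V s ω)) := by
  obtain ⟨l, hl⟩ := hV.leftLimExists ω s hs
  rwa [llim_eq_of_tendsto hs hl]

lemma IsRCLL.isBounded_image_Icc (hV : IsRCLL V) (ω : Ω) (a : ℝ) :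
    Bornology.IsBounded ((V · ω) '' Icc 0 a) := by
  refine isBounded_image_of_isLocallyBoundedOn_of_isCompact isCompact_Icc fun x hx => ?_
  obtain ⟨R, hR, hRb⟩ := Metric.exists_isBounded_image_of_tendsto (hV.rightCont ω x).tendsto
  rcases hx.1.eq_or_lt with rfl | hx0
  · exact ⟨R, nhdsWithin_mono _ Icc_subset_Ici_self hR, hRb⟩
  · obtain ⟨L, hL, hLb⟩ := Metric.exists_isBounded_image_of_tendsto (hV.tendsto_llim hx0 ω)
    refine ⟨L ∪ R, nhdsWithin_le_nhds ?_, by rw [image_union]; exact hLb.union hRb⟩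
    rw [← nhdsLT_sup_nhdsGE]
    exact union_mem_sup hL hR

lemma IsRCLL.bddAbove_abs_sub (hV : IsRCLL V) (ω : Ω) (u : ℝ) :
    BddAbove (range fun r : Icc (0:ℝ) u => |V r ω - V 0 ω|) := by
  obtain ⟨C, hC⟩ := isBounded_iff_forall_norm_le.1 (hV.isBounded_image_Icc ω u)
  refine ⟨C + C, ?_⟩
  rintro _ ⟨r, rfl⟩
  have h0 := hC _ (mem_image_of_mem _ ⟨le_rfl, r.2.1.trans r.2.2⟩)
  have hr := hC _ (mem_image_of_mem _ r.2)
  exact (abs_sub _ _).trans (add_le_add hr h0)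

lemma IsRCLL.tendsto_llim_seq (hV : IsRCLL V) {s : ℝ} (hs : 0 ≤ s) (ω : Ω) :
    Tendsto (fun n : ℕ => V (max (s - 1 / (n + 1)) 0) ω) atTop (𝓝 (llim V s ω)) := by
  rcases hs.eq_or_lt with rfl | hs
  · have h : ∀ n : ℕ, max (0 - 1 / ((n : ℝ) + 1)) 0 = 0 := fun n =>
      max_eq_right (by simp only [zero_sub, neg_nonpos]; positivity)
    simpa only [h, llim_of_nonpos le_rfl] using tendsto_const_nhds
  refine (hV.tendsto_llim hs ω).comp (tendsto_nhdsWithin_iff.2 ⟨?_, Eventually.of_forall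
    fun n => max_lt (sub_lt_self _ (by positivity)) hs⟩)
  simpa [max_eq_left hs.le] using
    ((tendsto_const_nhds (x := s)).sub tendsto_one_div_add_atTop_nhds_zero_nat).max
      (tendsto_const_nhds (x := (0:ℝ)))

def runningSup (V : ℝ → Ω → ℝ) (u : ℝ) (ω : Ω) : ℝ := ⨆ r : Icc (0:ℝ) u, |V r ω - V 0 ω|

lemma abs_sub_le_runningSup (hV : IsRCLL V) (ω : Ω) {u r : ℝ} (hr : r ∈ Icc 0 u) :
    |V r ω - V 0 ω| ≤ runningSup V u ω :=
  le_ciSup (hV.bddAbove_abs_sub ω u) ⟨r, hr⟩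

lemma runningSup_le {ω : Ω} {u C : ℝ} (hC : 0 ≤ C) (h : ∀ r ∈ Icc 0 u, |V r ω - V 0 ω| ≤ C) :
    runningSup V u ω ≤ C :=
  Real.iSup_le (fun r => h r r.2) hC

lemma runningSup_nonneg (u : ℝ) (ω : Ω) : 0 ≤ runningSup V u ω :=
  Real.iSup_nonneg fun _ => abs_nonneg _

lemma runningSup_zero (ω : Ω) : runningSup V 0 ω = 0 :=
  (runningSup_le le_rfl fun r hr => by simp [le_antisymm hr.2 hr.1]).antisymm
    (runningSup_nonneg 0 ω)

lemma runningSup_of_neg {u : ℝ} (hu : u < 0) (ω : Ω) : runningSup V u ω = 0 :=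
  (runningSup_le le_rfl fun _ hr => absurd (hr.1.trans hr.2) hu.not_ge).antisymm
    (runningSup_nonneg u ω)

lemma monotone_runningSup (hV : IsRCLL V) (ω : Ω) : Monotone (runningSup V · ω) :=
  fun _ _ huv => runningSup_le (runningSup_nonneg _ ω) fun _ hr =>
    abs_sub_le_runningSup hV ω ⟨hr.1, hr.2.trans huv⟩

lemma tendsto_llim_runningSup (hV : IsRCLL V) (ω : Ω) {u : ℝ} (hu : 0 < u) :
    Tendsto (runningSup V · ω) (𝓝[<] u) (𝓝 (llim (runningSup V) u ω)) := by
  have h := (monotone_runningSup hV ω).tendsto_nhdsLT u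
  rwa [← llim_eq_of_tendsto hu h] at h

lemma runningSup_le_llim_runningSup (hV : IsRCLL V) (ω : Ω) {r u : ℝ} (hr : r < u) :
    runningSup V r ω ≤ llim (runningSup V) u ω := by
  rcases le_or_gt u 0 with hu | hu
  · rw [llim_of_nonpos hu, runningSup_zero, runningSup_of_neg (hr.trans_le hu)]
  · exact ge_of_tendsto (tendsto_llim_runningSup hV ω hu) <|
      eventually_of_mem (Ioo_mem_nhdsLT hr) fun v hv => monotone_runningSup hV ω hv.1.le

lemma llim_runningSup_nonneg (hV : IsRCLL V) (u : ℝ) (ω : Ω) : 0 ≤ llim (runningSup V) u ω := by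
  rcases le_or_gt u 0 with hu | hu
  · rw [llim_of_nonpos hu, runningSup_zero]
  · exact (runningSup_nonneg 0 ω).trans (runningSup_le_llim_runningSup hV ω hu)

lemma llim_runningSup_le_runningSup (hV : IsRCLL V) (ω : Ω) {u : ℝ} (hu : 0 ≤ u) :
    llim (runningSup V) u ω ≤ runningSup V u ω := by
  rcases hu.eq_or_lt with rfl | hu
  · rw [llim_of_nonpos le_rfl]
  · exact le_of_tendsto (tendsto_llim_runningSup hV ω hu) <|
      eventually_mem_nhdsWithin.mono fun v hv => monotone_runningSup hV ω (le_of_lt hv)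

lemma abs_llim_sub_le_llim_runningSup (hV : IsRCLL V) (ω : Ω) {u : ℝ} (hu : 0 ≤ u) :
    |llim V u ω - V 0 ω| ≤ llim (runningSup V) u ω := by
  rcases hu.eq_or_lt with rfl | hu
  · simp [llim_of_nonpos le_rfl, runningSup_zero]
  · exact le_of_tendsto_of_tendsto ((hV.tendsto_llim hu ω).sub_const _).abs
      (tendsto_llim_runningSup hV ω hu) <| eventually_of_mem (Ioo_mem_nhdsLT hu) fun v hv =>
        abs_sub_le_runningSup hV ω ⟨hv.1.le, le_rfl⟩

lemma runningSup_sub_llim_le (hV : IsRCLL V) (ω : Ω) {S T L : ℝ} (hS : 0 ≤ S)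
    (hL : ∀ q : ℚ, |V (min (max (q : ℝ) S) T) ω - llim V S ω| ≤ L) :
    runningSup V T ω - llim (runningSup V) S ω ≤ L := by
  have hS' := llim_runningSup_nonneg hV S ω
  suffices runningSup V T ω ≤ llim (runningSup V) S ω + L by linarith
  refine runningSup_le (add_nonneg hS' ((abs_nonneg _).trans (hL 0))) fun r hr => ?_
  rcases lt_or_ge r S with hrS | hrS
  · have := (abs_sub_le_runningSup hV ω ⟨hr.1, le_rfl⟩).trans
      (runningSup_le_llim_runningSup hV ω hrS)
    linarith [(abs_nonneg _).trans (hL 0)]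
  · have hosc : |V r ω - llim V S ω| ≤ L :=
      le_of_forall_rat_clip (f := fun x => |V x ω - llim V S ω|)
        (fun x => ((hV.rightCont ω x).sub continuousWithinAt_const).abs) hL ⟨hrS, hr.2⟩
    calc |V r ω - V 0 ω| ≤ |V r ω - llim V S ω| + |llim V S ω - V 0 ω| := abs_sub_le _ _ _
      _ ≤ L + llim (runningSup V) S ω := add_le_add hosc (abs_llim_sub_le_llim_runningSup hV ω hS)
      _ = _ := add_comm _ _

lemma isRCLL_runningSup (hV : IsRCLL V) : IsRCLL (runningSup V) where
  rightCont ω u := by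
    rcases lt_or_ge u 0 with hu | hu
    · refine (continuousWithinAt_const (b := (0:ℝ))).congr_of_eventuallyEq ?_
        (runningSup_of_neg hu ω)
      exact eventually_nhdsWithin_of_eventually_nhds
        (eventually_of_mem (Iio_mem_nhds hu) fun v hv => runningSup_of_neg hv ω)
    refine tendsto_order.2 ⟨fun c hc => eventually_mem_nhdsWithin.mono fun v hv =>
      hc.trans_le (monotone_runningSup hV ω hv), fun c hc => ?_⟩
    set ε := c - runningSup V u ω
    obtain ⟨w, hw, hsub⟩ := mem_nhdsGE_iff_exists_Ico_subset.1 <|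
      (hV.rightCont ω u).eventually (Metric.ball_mem_nhds _ (half_pos (sub_pos.2 hc)))
    refine mem_nhdsGE_iff_exists_Ico_subset.2 ⟨w, hw, fun v hv => ?_⟩
    suffices runningSup V v ω ≤ runningSup V u ω + ε / 2 by
      change runningSup V v ω < c; linarith
    refine runningSup_le (by linarith [runningSup_nonneg (V := V) u ω]) fun r hr => ?_
    rcases le_or_gt r u with hru | hru
    · linarith [abs_sub_le_runningSup hV ω ⟨hr.1, hru⟩]
    · have hclose : |V r ω - V u ω| < ε / 2 := hsub ⟨hru.le, hr.2.trans_lt hv.2⟩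
      linarith [abs_sub_le (V r ω) (V u ω) (V 0 ω), abs_sub_le_runningSup hV ω ⟨hu, le_rfl⟩]
  leftLimExists ω u _ := ⟨_, (monotone_runningSup hV ω).tendsto_nhdsLT u⟩

lemma runningSup_eq_iSup_rat (hV : IsRCLL V) {u : ℝ} (hu : 0 ≤ u) (ω : Ω) :
    runningSup V u ω = ⨆ q : ℚ, |V (min (max (q : ℝ) 0) u) ω - V 0 ω| := by
  have hle : ∀ q : ℚ, |V (min (max (q : ℝ) 0) u) ω - V 0 ω| ≤ runningSup V u ω := fun q =>
    abs_sub_le_runningSup hV ω ⟨le_min (le_max_right _ _) hu, min_le_right _ _⟩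
  refine le_antisymm ?_ (ciSup_le hle)
  have h := runningSup_sub_llim_le hV ω le_rfl (T := u) fun q => by
    rw [llim_of_nonpos le_rfl]; exact le_ciSup ⟨_, forall_mem_range.2 hle⟩ q
  rwa [llim_of_nonpos le_rfl, runningSup_zero, sub_zero] at h

end Path

section Measurability

variable {Ω : Type*} {mΩ : MeasurableSpace Ω} {ℱ : Filtration ℝ mΩ} {V : ℝ → Ω → ℝ}

lemma IsRCLL.isStronglyProgressive (hAd : Adapted ℱ V) (hV : IsRCLL V) :
    IsStronglyProgressive ℱ V := by
  intro i
  let g : ℕ → ℝ → ℝ := fun n x => min i (⌈x * 2 ^ n⌉ / 2 ^ n)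
  have hg : ∀ x ≤ i, Tendsto (g · x) atTop (𝓝[≥] x) := by
    intro x hx
    have hle : ∀ n : ℕ, x ≤ g n x := fun n =>
      le_min hx ((le_div_iff₀ (by positivity)).2 (Int.le_ceil _))
    have hge : ∀ n : ℕ, g n x ≤ x + (2 ^ n)⁻¹ := fun n => (min_le_right _ _).trans <| by
      rw [div_le_iff₀ (by positivity), add_mul, inv_mul_cancel₀ (by positivity : (2:ℝ) ^ n ≠ 0)]
      exact (Int.ceil_lt_add_one _).le
    have hlim : Tendsto (fun n : ℕ => x + ((2:ℝ) ^ n)⁻¹) atTop (𝓝 x) := by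
      simpa using tendsto_const_nhds.add
        (tendsto_inv_atTop_zero.comp (tendsto_pow_atTop_atTop_of_one_lt (one_lt_two (α := ℝ))))
    exact tendsto_nhdsWithin_iff.2 ⟨tendsto_of_tendsto_of_tendsto_of_le_of_le tendsto_const_nhds
      hlim hle hge, Eventually.of_forall hle⟩
  have hmeas : ∀ n, StronglyMeasurable[Subtype.instMeasurableSpace.prod (ℱ i)]
      fun p : Iic i × Ω => V (g n p.1) p.2 := by
    intro n
    have hstep : Measurable[(ℱ i).prod inferInstance]
        fun p : Ω × ℤ => V (min i (p.2 / 2 ^ n)) p.1 :=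
      measurable_from_prod_countable_left fun k =>
        (hAd.measurable_le (min_le_left _ _) : Measurable[ℱ i] (V (min i (k / 2 ^ n))))
    refine (hstep.comp (measurable_snd.prodMk ?_)).stronglyMeasurable
    exact Int.measurable_ceil.comp ((measurable_subtype_coe.comp measurable_fst).mul_const _)
  exact stronglyMeasurable_of_tendsto atTop hmeas <| tendsto_pi_nhds.2 fun p =>
    (hV.rightCont p.2 p.1).tendsto.comp (hg _ p.1.2)

lemma stronglyMeasurable_llim_stoppedValue (hProg : IsStronglyProgressive ℱ V) (hV : IsRCLL V)
    {S : Ω → ℝ} (hS : IsStoppingTime ℱ (fun ω => (S ω : WithTop ℝ))) (hS0 : ∀ ω, 0 ≤ S ω) :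
    StronglyMeasurable[hS.measurableSpace] fun ω => llim V (S ω) ω := by
  refine stronglyMeasurable_of_tendsto atTop (fun n => ?_)
    (tendsto_pi_nhds.2 fun ω => hV.tendsto_llim_seq (hS0 ω) ω)
  -- `V_{(S - 1/(n+1)) ∨ 0}` is the value at `S` of a progressive process
  have ht : IsStronglyProgressive ℱ fun u (_ : Ω) => min u (max (u - 1 / (n + 1)) 0) :=
    (stronglyAdapted_const' ℱ _).isStronglyProgressive_of_continuous fun _ => by fun_prop
  have h :=
    (measurable_stoppedValue (hProg.comp ht fun _ _ => min_le_left _ _) hS).stronglyMeasurable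
  convert h using 2 with ω
  exact congrArg (V · ω) (min_eq_right (max_le (sub_le_self _ (by positivity)) (hS0 ω))).symm

lemma adapted_runningSup (hAd : Adapted ℱ V) (hV : IsRCLL V) : Adapted ℱ (runningSup V) := by
  intro u
  rcases lt_or_ge u 0 with hu | hu
  · simp only [funext (runningSup_of_neg (V := V) hu), measurable_const]
  simp only [funext (runningSup_eq_iSup_rat hV hu)]
  exact Measurable.iSup fun q => continuous_abs.measurable.comp
    ((hAd.measurable_le (min_le_right _ _)).sub (hAd.measurable_le hu))

end Measurability

section CondExpKernel

variable {Ω : Type*} {m mΩ : MeasurableSpace Ω} [StandardBorelSpace Ω]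
  {μ : Measure Ω} [IsFiniteMeasure μ]

lemma lintegral_lintegral_condExpKernel (hm : m ≤ mΩ) {f : Ω → ℝ≥0∞} (hf : Measurable f) :
    ∫⁻ ω, ∫⁻ y, f y ∂(condExpKernel μ m ω) ∂μ = ∫⁻ y, f y ∂μ := by
  conv_rhs => rw [← condExpKernel_comp_trim (μ := μ) hm]
  rw [Measure.lintegral_bind (condExpKernel μ m).measurable.aemeasurable
    hf.aemeasurable, lintegral_trim hm hf.lintegral_kernel]

lemma integrable_of_essSup_condE_ne_top (hm : m ≤ mΩ) {f : Ω → ℝ} (hf : Measurable f)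
    (hf0 : 0 ≤ f) (hfin : essSup (condE μ m f) μ ≠ ⊤) : Integrable f μ := by
  refine ⟨hf.aestronglyMeasurable, ?_⟩
  rw [hasFiniteIntegral_iff_ofReal (Eventually.of_forall hf0),
    ← lintegral_lintegral_condExpKernel hm hf.ennreal_ofReal]
  calc ∫⁻ ω, condE μ m f ω ∂μ ≤ ∫⁻ _, essSup (condE μ m f) μ ∂μ :=
        lintegral_mono_ae ae_le_essSup
    _ < ⊤ := by simp [lt_top_iff_ne_top, ENNReal.mul_eq_top, hfin]

lemma condExp_ae_le_of_essSup_condE_le (hm : m ≤ mΩ) {f : Ω → ℝ} (hf : Integrable f μ)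
    (hf0 : 0 ≤ f) {c : ℝ} (hc : 0 ≤ c) (hb : essSup (condE μ m f) μ ≤ ENNReal.ofReal c) :
    μ[f|m] ≤ᵐ[μ] fun _ => c := by
  filter_upwards [condExp_ae_eq_integral_condExpKernel hm hf, hf.condExpKernel_ae (m := m),
    ae_le_essSup (f := condE μ m f)] with ω hω hint hle
  rw [hω, ← ENNReal.ofReal_le_ofReal_iff hc,
    ofReal_integral_eq_lintegral_ofReal hint (Eventually.of_forall hf0)]
  exact hle.trans hb

lemma ae_condE_le_of_le_iSup (hm : m ≤ mΩ) {g : Ω → ℝ} {G : ℕ → Ω → ℝ}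
    (hG : ∀ n, Measurable (G n)) (hG0 : ∀ n, 0 ≤ G n) (hGb : ∀ n, ∃ b, ∀ ω, G n ω ≤ b)
    (hmono : Monotone G) (hdom : ∀ ω, ENNReal.ofReal (g ω) ≤ ⨆ n, ENNReal.ofReal (G n ω))
    {c : ℝ} (hc : ∀ n, μ[G n|m] ≤ᵐ[μ] fun _ => c) :
    ∀ᵐ ω ∂μ, condE μ m g ω ≤ ENNReal.ofReal c := by
  have hint : ∀ n (ν : Measure Ω) [IsFiniteMeasure ν], Integrable (G n) ν := fun n ν _ => by
    obtain ⟨b, hb⟩ := hGb n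
    refine (integrable_const b).mono' (hG n).aestronglyMeasurable (Eventually.of_forall fun ω => ?_)
    rw [Real.norm_eq_abs, abs_of_nonneg (hG0 n ω)]
    exact hb ω
  have hkernel : ∀ᵐ ω ∂μ, ∀ n, ∫ y, G n y ∂(condExpKernel μ m ω) ≤ c := ae_all_iff.2 fun n => by
    filter_upwards [condExp_ae_eq_integral_condExpKernel hm (hint n μ), hc n] with ω h1 h2
    rwa [← h1]
  filter_upwards [hkernel] with ω hω
  calc condE μ m g ω ≤ ∫⁻ y, ⨆ n, ENNReal.ofReal (G n y) ∂(condExpKernel μ m ω) :=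
        lintegral_mono hdom
    _ = ⨆ n, ∫⁻ y, ENNReal.ofReal (G n y) ∂(condExpKernel μ m ω) :=
        lintegral_iSup (fun n => (hG n).ennreal_ofReal)
          fun _ _ hnk y => ENNReal.ofReal_le_ofReal (hmono hnk y)
    _ ≤ ENNReal.ofReal c := iSup_le fun n => by
        rw [← ofReal_integral_eq_lintegral_ofReal (hint n _) (Eventually.of_forall (hG0 n))]
        exact ENNReal.ofReal_le_ofReal (hω n)

end CondExpKernel

section CondExp

variable {Ω : Type*} {m m₂ mΩ : MeasurableSpace Ω} {μ : Measure Ω} [IsFiniteMeasure μ]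

lemma condExp_ae_le_const_add_add (hm : m ≤ mΩ) {f g h : Ω → ℝ} (hf : Integrable f μ)
    (hg : Integrable g μ) (hh : Integrable h μ) {a b c : ℝ} (hfgh : ∀ ω, f ω ≤ a + g ω + h ω)
    (hgb : μ[g|m] ≤ᵐ[μ] fun _ => b) (hhc : μ[h|m] ≤ᵐ[μ] fun _ => c) :
    μ[f|m] ≤ᵐ[μ] fun _ => a + b + c := by
  have hsum : Integrable ((fun _ => a) + g + h) μ := ((integrable_const a).add hg).add hh
  filter_upwards [condExp_mono hf hsum (Eventually.of_forall hfgh),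
    condExp_add ((integrable_const a).add hg) hh m, condExp_add (integrable_const a) hg m, hgb,
    hhc] with ω hmono hadd₁ hadd₂ hgω hhω
  rw [hadd₁, Pi.add_apply, hadd₂, Pi.add_apply, condExp_const hm] at hmono
  linarith

lemma condExp_mul_ae_le (hm₁₂ : m ≤ m₂) (hm₂ : m₂ ≤ mΩ) {W G : Ω → ℝ}
    (hW : StronglyMeasurable[m₂] W) (hW0 : 0 ≤ W) (hWi : Integrable W μ) (hGi : Integrable G μ)
    (hWGi : Integrable (W * G) μ) {c w : ℝ} (hc : 0 ≤ c) (hG : μ[G|m₂] ≤ᵐ[μ] fun _ => c)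
    (hWw : μ[W|m] ≤ᵐ[μ] fun _ => w) :
    μ[W * G|m] ≤ᵐ[μ] fun _ => c * w := by
  have : IsFiniteMeasure (μ.trim hm₂) := isFiniteMeasure_trim hm₂
  have hinner : μ[W * G|m₂] ≤ᵐ[μ] c • W := by
    filter_upwards [condExp_mul_of_stronglyMeasurable_left hW hWGi hGi, hG] with ω h₁ h₂
    rw [h₁, Pi.mul_apply, Pi.smul_apply, smul_eq_mul, mul_comm c]
    exact mul_le_mul_of_nonneg_left h₂ (hW0 ω)
  filter_upwards [condExp_condExp_of_le hm₁₂ hm₂ (f := W * G) (μ := μ),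
    condExp_mono integrable_condExp (hWi.smul c) hinner, condExp_smul c W m, hWw]
    with ω htower hmono hsmul hWω
  rw [← htower]
  refine hmono.trans ?_
  rw [hsmul, Pi.smul_apply, smul_eq_mul]
  exact mul_le_mul_of_nonneg_left hWω hc

lemma condExp_ae_le_const (hm : m ≤ mΩ) {f : Ω → ℝ} (hf : Integrable f μ) {c : ℝ}
    (h : f ≤ᵐ[μ] fun _ => c) : μ[f|m] ≤ᵐ[μ] fun _ => c := by
  simpa only [condExp_const hm] using condExp_mono (m := m) hf (integrable_const c) h

lemma condExp_ae_le_of_condExp_ae_le (hm₁₂ : m ≤ m₂) (hm₂ : m₂ ≤ mΩ) {f : Ω → ℝ} {c : ℝ}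
    (h : μ[f|m₂] ≤ᵐ[μ] fun _ => c) : μ[f|m] ≤ᵐ[μ] fun _ => c := by
  have : IsFiniteMeasure (μ.trim hm₂) := isFiniteMeasure_trim hm₂
  filter_upwards [condExp_condExp_of_le hm₁₂ hm₂ (f := f) (μ := μ),
    condExp_ae_le_const (hm₁₂.trans hm₂) integrable_condExp h] with ω htower hle
  rwa [← htower]

end CondExp

section StoppingTime

variable {Ω ι : Type*} {mΩ : MeasurableSpace Ω} [Preorder ι] {𝒢 : Filtration ι mΩ}

lemma MeasureTheory.IsStoppingTime.piecewise_of_measurableSet {σ τ : Ω → WithTop ι}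
    (hσ : IsStoppingTime 𝒢 σ) (hτ : IsStoppingTime 𝒢 τ) (hστ : ∀ ω, σ ω ≤ τ ω) {s : Set Ω}
    [DecidablePred (· ∈ s)] (hs : MeasurableSet[hσ.measurableSpace] s) :
    IsStoppingTime 𝒢 (s.piecewise σ τ) := by
  intro i
  have : {ω | s.piecewise σ τ ω ≤ i}
      = s ∩ {ω | σ ω ≤ i} ∪ sᶜ ∩ {ω | σ ω ≤ i} ∩ {ω | τ ω ≤ i} := by
    ext ω
    by_cases hω : ω ∈ s
    · simp [hω]
    · simpa [hω] using fun h => (hστ ω).trans h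
  rw [this]
  exact (hs.2 i).union ((hs.compl.2 i).inter (hτ i))

end StoppingTime

section Grid

variable {Ω : Type*} {mΩ : MeasurableSpace Ω} {ℱ : Filtration ℝ mΩ} {V : ℝ → Ω → ℝ}
  {S T : Ω → ℝ}

lemma isStoppingTime_fold_min {ι : Type*} [DecidableEq ι] (F : Finset ι) {f : ι → Ω → ℝ}
    (hT : IsStoppingTime ℱ (fun ω => (T ω : WithTop ℝ)))
    (hf : ∀ i ∈ F, IsStoppingTime ℱ (fun ω => (f i ω : WithTop ℝ))) :
    IsStoppingTime ℱ (fun ω => ((F.fold min (T ω) (f · ω) : ℝ) : WithTop ℝ)) := by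
  induction F using Finset.induction_on with
  | empty => simpa using hT
  | insert i F hi ih =>
    simp_rw [Finset.fold_insert hi, WithTop.coe_min]
    exact (hf i (F.mem_insert_self i)).min (ih fun j hj => hf j (Finset.mem_insert_of_mem hj))

lemma measurable_fold_max {ι : Type*} [DecidableEq ι] (F : Finset ι) {f : ι → Ω → ℝ}
    (hf : ∀ i ∈ F, Measurable (f i)) (c : ℝ) :
    Measurable (fun ω => F.fold max c (f · ω)) := by
  induction F using Finset.induction_on with
  | empty => simp
  | insert i F hi ih =>
    simp_rw [Finset.fold_insert hi]
    exact (hf i (F.mem_insert_self i)).max (ih fun j hj => hf j (Finset.mem_insert_of_mem hj))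

def clip (S T : Ω → ℝ) (q : ℚ) (ω : Ω) : ℝ := min (max (q : ℝ) (S ω)) (T ω)

def gridOsc (V : ℝ → Ω → ℝ) (F : Finset ℚ) (S T : Ω → ℝ) (ω : Ω) : ℝ :=
  F.fold max 0 fun q => |V (clip S T q ω) ω - llim V (S ω) ω|

/-- The first grid time in `[S, T]` at which `V` is at distance at least `λ` from `V_{S-}`,
and `T` if there is none. -/
def gridHit (V : ℝ → Ω → ℝ) (F : Finset ℚ) (lam : ℝ) (S T : Ω → ℝ) (ω : Ω) : ℝ :=
  F.fold min (T ω) fun q =>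
    if lam ≤ |V (clip S T q ω) ω - llim V (S ω) ω| then clip S T q ω else T ω

lemma le_clip {ω : Ω} (hST : S ω ≤ T ω) (q : ℚ) : S ω ≤ clip S T q ω :=
  le_min (le_max_right _ _) hST

lemma clip_le (q : ℚ) (ω : Ω) : clip S T q ω ≤ T ω := min_le_right _ _

lemma clip_eq_clip_of_le {R : Ω → ℝ} {q : ℚ} {ω : Ω} (hSR : S ω ≤ R ω)
    (hR : R ω ≤ clip S T q ω) : clip S T q ω = clip R T q ω := by
  simp only [clip] at *
  grind

lemma isStoppingTime_clip (hS : IsStoppingTime ℱ (fun ω => (S ω : WithTop ℝ)))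
    (hT : IsStoppingTime ℱ (fun ω => (T ω : WithTop ℝ))) (q : ℚ) :
    IsStoppingTime ℱ (fun ω => (clip S T q ω : WithTop ℝ)) := by
  simpa only [clip, WithTop.coe_min, WithTop.coe_max] using
    ((isStoppingTime_const ℱ (q : ℝ)).max hS).min hT

lemma gridOsc_nonneg (F : Finset ℚ) (ω : Ω) : 0 ≤ gridOsc V F S T ω :=
  (Finset.le_fold_max _).2 (Or.inl le_rfl)

lemma abs_le_gridOsc {F : Finset ℚ} {q : ℚ} (hq : q ∈ F) (ω : Ω) :
    |V (clip S T q ω) ω - llim V (S ω) ω| ≤ gridOsc V F S T ω :=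
  (Finset.le_fold_max _).2 (Or.inr ⟨q, hq, le_rfl⟩)

lemma gridOsc_le {F : Finset ℚ} {ω : Ω} {c : ℝ} (hc : 0 ≤ c)
    (h : ∀ q ∈ F, |V (clip S T q ω) ω - llim V (S ω) ω| ≤ c) : gridOsc V F S T ω ≤ c :=
  (Finset.fold_max_le _).2 ⟨hc, h⟩

lemma gridOsc_mono {F F' : Finset ℚ} (hF : F ⊆ F') (ω : Ω) :
    gridOsc V F S T ω ≤ gridOsc V F' S T ω :=
  gridOsc_le (gridOsc_nonneg F' ω) fun _ hq => abs_le_gridOsc (hF hq) ω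

lemma le_gridHit (hST : ∀ ω, S ω ≤ T ω) (F : Finset ℚ) (lam : ℝ) (ω : Ω) :
    S ω ≤ gridHit V F lam S T ω :=
  (Finset.le_fold_min _).2 ⟨hST ω, fun q _ => by split_ifs; exacts [le_clip (hST ω) q, hST ω]⟩

lemma gridHit_le (F : Finset ℚ) (lam : ℝ) (ω : Ω) : gridHit V F lam S T ω ≤ T ω :=
  (Finset.fold_min_le _).2 (Or.inl le_rfl)

lemma gridHit_le_clip {F : Finset ℚ} {lam : ℝ} {q : ℚ} (hq : q ∈ F) {ω : Ω}
    (h : lam ≤ |V (clip S T q ω) ω - llim V (S ω) ω|) :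
    gridHit V F lam S T ω ≤ clip S T q ω :=
  (Finset.fold_min_le _).2 (Or.inr ⟨q, hq, by rw [if_pos h]⟩)

lemma gridHit_eq (F : Finset ℚ) (lam : ℝ) (ω : Ω) :
    gridHit V F lam S T ω = T ω ∨ ∃ q ∈ F, lam ≤ |V (clip S T q ω) ω - llim V (S ω) ω| ∧
      gridHit V F lam S T ω = clip S T q ω := by
  have hle := (Finset.le_fold_min _).1 (le_refl (gridHit V F lam S T ω))
  rcases (Finset.fold_min_le _).1 (le_refl (gridHit V F lam S T ω)) with hT | ⟨q, hq, hR⟩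
  · exact Or.inl (hle.1.antisymm hT)
  · have hR := (hle.2 q hq).antisymm hR
    split_ifs at hR with h
    exacts [Or.inr ⟨q, hq, h, hR⟩, Or.inl hR]

lemma le_abs_gridHit {F : Finset ℚ} {lam : ℝ} {q : ℚ} (hq : q ∈ F) {ω : Ω}
    (h : lam ≤ |V (clip S T q ω) ω - llim V (S ω) ω|) :
    lam ≤ |V (gridHit V F lam S T ω) ω - llim V (S ω) ω| := by
  rcases gridHit_eq F lam ω with hT | ⟨q', -, h', hR⟩
  · rwa [(gridHit_le_clip hq h).antisymm (hT ▸ clip_le q ω)]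
  · rwa [hR]

/-- Pathwise, the truncated grid oscillation after `S` is at most `λ`, unless the level `λ` is hit
at `R`; then it is controlled by the grid oscillation after `R`, with a weight `≥ 1`. -/
lemma min_gridOsc_le (hST : ∀ ω, S ω ≤ T ω) (F : Finset ℚ) {lam b : ℝ} (hlam : 0 < lam)
    (hb : 0 ≤ b) (ω : Ω) :
    min (gridOsc V F S T ω) b ≤ lam
      + lam⁻¹ * |V (gridHit V F lam S T ω) ω - llim V (S ω) ω|
        * min (gridOsc V F (gridHit V F lam S T) T ω) b
      + |llim V (gridHit V F lam S T ω) ω - llim V (S ω) ω| := by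
  set R := gridHit V F lam S T
  set D := |llim V (R ω) ω - llim V (S ω) ω|
  have hGR : 0 ≤ min (gridOsc V F R T ω) b := le_min (gridOsc_nonneg F ω) hb
  have hWG : 0 ≤ lam⁻¹ * |V (R ω) ω - llim V (S ω) ω| * min (gridOsc V F R T ω) b := by
    positivity
  have hD : 0 ≤ D := abs_nonneg _
  rcases (Finset.le_fold_max _).1 (le_refl (gridOsc V F S T ω)) with h0 | ⟨q, hq, hmax⟩
  · linarith [min_le_left (gridOsc V F S T ω) b]
  by_cases hhit : lam ≤ |V (clip S T q ω) ω - llim V (S ω) ω|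
  · have hW : 1 ≤ lam⁻¹ * |V (R ω) ω - llim V (S ω) ω| := by
      rw [le_inv_mul_iff₀ hlam, mul_one]; exact le_abs_gridHit hq hhit
    have hosc : gridOsc V F S T ω ≤ gridOsc V F R T ω + D :=
      calc gridOsc V F S T ω ≤ |V (clip S T q ω) ω - llim V (S ω) ω| := hmax
        _ ≤ |V (clip S T q ω) ω - llim V (R ω) ω| + D := abs_sub_le _ _ _
        _ ≤ gridOsc V F R T ω + D := by
          rw [clip_eq_clip_of_le (le_gridHit hST F lam ω) (gridHit_le_clip hq hhit)]
          exact add_le_add (abs_le_gridOsc hq ω) le_rfl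
    have htrunc : min (gridOsc V F S T ω) b ≤ min (gridOsc V F R T ω) b + D := by
      rw [← min_add_add_right]; exact min_le_min hosc (le_add_of_nonneg_right hD)
    linarith [le_mul_of_one_le_left hGR hW]
  · linarith [min_le_left (gridOsc V F S T ω) b]

end Grid

section GridMeasurability

variable {Ω : Type*} {mΩ : MeasurableSpace Ω} {ℱ : Filtration ℝ mΩ} {V : ℝ → Ω → ℝ}
  {S T : Ω → ℝ}

lemma measurable_abs_sub_llim (hProg : IsStronglyProgressive ℱ V) (hV : IsRCLL V)
    (hS : IsStoppingTime ℱ (fun ω => (S ω : WithTop ℝ)))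
    (hT : IsStoppingTime ℱ (fun ω => (T ω : WithTop ℝ))) (hS0 : ∀ ω, 0 ≤ S ω)
    (hST : ∀ ω, S ω ≤ T ω) :
    Measurable[hT.measurableSpace] fun ω => |V (T ω) ω - llim V (S ω) ω| := by
  have hllim := (stronglyMeasurable_llim_stoppedValue hProg hV hS hS0).mono
    (hS.measurableSpace_mono hT fun ω => WithTop.coe_le_coe.2 (hST ω))
  exact continuous_abs.measurable.comp ((measurable_stoppedValue hProg hT).sub hllim.measurable)

lemma isStoppingTime_gridHit (hProg : IsStronglyProgressive ℱ V) (hV : IsRCLL V)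
    (hS : IsStoppingTime ℱ (fun ω => (S ω : WithTop ℝ)))
    (hT : IsStoppingTime ℱ (fun ω => (T ω : WithTop ℝ))) (hS0 : ∀ ω, 0 ≤ S ω)
    (hST : ∀ ω, S ω ≤ T ω) (F : Finset ℚ) (lam : ℝ) :
    IsStoppingTime ℱ (fun ω => (gridHit V F lam S T ω : WithTop ℝ)) := by
  classical
  refine isStoppingTime_fold_min F hT fun q _ => ?_
  have hclip := isStoppingTime_clip hS hT q
  have hC : MeasurableSet[hclip.measurableSpace]
      {ω | lam ≤ |V (clip S T q ω) ω - llim V (S ω) ω|} :=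
    measurable_abs_sub_llim hProg hV hS hclip hS0 (fun ω => le_clip (hST ω) q) measurableSet_Ici
  convert hclip.piecewise_of_measurableSet hT (fun ω => WithTop.coe_le_coe.2 (clip_le q ω)) hC
    using 1
  funext ω
  simp only [Set.piecewise, mem_ofPred_eq]
  split_ifs <;> rfl

lemma measurable_gridOsc (hProg : IsStronglyProgressive ℱ V) (hV : IsRCLL V)
    (hS : IsStoppingTime ℱ (fun ω => (S ω : WithTop ℝ)))
    (hT : IsStoppingTime ℱ (fun ω => (T ω : WithTop ℝ))) (hS0 : ∀ ω, 0 ≤ S ω)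
    (hST : ∀ ω, S ω ≤ T ω) (F : Finset ℚ) : Measurable (gridOsc V F S T) := by
  classical
  refine measurable_fold_max F (fun q _ => ?_) 0
  have hclip := isStoppingTime_clip hS hT q
  exact (measurable_abs_sub_llim hProg hV hS hclip hS0 fun ω => le_clip (hST ω) q).mono
    hclip.measurableSpace_le le_rfl

lemma integrable_min_gridOsc {μ : Measure Ω} [IsFiniteMeasure μ]
    (hProg : IsStronglyProgressive ℱ V) (hV : IsRCLL V)
    (hS : IsStoppingTime ℱ (fun ω => (S ω : WithTop ℝ)))
    (hT : IsStoppingTime ℱ (fun ω => (T ω : WithTop ℝ))) (hS0 : ∀ ω, 0 ≤ S ω)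
    (hST : ∀ ω, S ω ≤ T ω) (F : Finset ℚ) {b : ℝ} (hb : 0 ≤ b) :
    Integrable (fun ω => min (gridOsc V F S T ω) b) μ :=
  (integrable_const b).mono'
    ((measurable_gridOsc hProg hV hS hT hS0 hST F).min measurable_const).aestronglyMeasurable
    (Eventually.of_forall fun ω => by
      rw [Real.norm_eq_abs, abs_of_nonneg (le_min (gridOsc_nonneg F ω) hb)]
      exact min_le_right _ _)

end GridMeasurability

section Oscillation

variable {Ω : Type*} {mΩ : MeasurableSpace Ω} [StandardBorelSpace Ω] {μ : Measure Ω}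
  [IsFiniteMeasure μ] {ℱ : Filtration ℝ mΩ} {V : ℝ → Ω → ℝ} {s t : ℝ} {S T : Ω → ℝ}

lemma essSup_condE_le_bmoRho (hS : IsStoppingTime ℱ (fun ω => (S ω : WithTop ℝ)))
    (hT : IsStoppingTime ℱ (fun ω => (T ω : WithTop ℝ))) (hsS : ∀ ω, s ≤ S ω)
    (hST : ∀ ω, S ω ≤ T ω) (hTt : ∀ ω, T ω ≤ t) :
    essSup (condE μ hS.measurableSpace fun ω => |V (T ω) ω - llim V (S ω) ω|) μ
      ≤ bmoRho μ ℱ V s t :=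
  le_iSup_of_le S <| le_iSup_of_le T <| le_iSup_of_le hS <| le_iSup_of_le hT <|
    le_iSup_of_le hsS <| le_iSup_of_le hST <| le_iSup_of_le hTt le_rfl

variable (hProg : IsStronglyProgressive ℱ V) (hV : IsRCLL V) (hs : 0 ≤ s)
include hProg hV hs

lemma integrable_abs_sub_llim (hρ : bmoRho μ ℱ V s t ≠ ⊤)
    (hS : IsStoppingTime ℱ (fun ω => (S ω : WithTop ℝ)))
    (hT : IsStoppingTime ℱ (fun ω => (T ω : WithTop ℝ))) (hsS : ∀ ω, s ≤ S ω)
    (hST : ∀ ω, S ω ≤ T ω) (hTt : ∀ ω, T ω ≤ t) :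
    Integrable (fun ω => |V (T ω) ω - llim V (S ω) ω|) μ :=
  integrable_of_essSup_condE_ne_top hS.measurableSpace_le
    ((measurable_abs_sub_llim hProg hV hS hT (fun ω => hs.trans (hsS ω)) hST).mono
      hT.measurableSpace_le le_rfl)
    (fun _ => abs_nonneg _) (ne_top_of_le_ne_top hρ (essSup_condE_le_bmoRho hS hT hsS hST hTt))

lemma condExp_abs_sub_llim_le {ρ : ℝ} (hρ0 : 0 ≤ ρ) (hρ : bmoRho μ ℱ V s t ≤ ENNReal.ofReal ρ)
    (hS : IsStoppingTime ℱ (fun ω => (S ω : WithTop ℝ)))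
    (hT : IsStoppingTime ℱ (fun ω => (T ω : WithTop ℝ))) (hsS : ∀ ω, s ≤ S ω)
    (hST : ∀ ω, S ω ≤ T ω) (hTt : ∀ ω, T ω ≤ t) :
    μ[(fun ω => |V (T ω) ω - llim V (S ω) ω|)|hS.measurableSpace] ≤ᵐ[μ] fun _ => ρ :=
  condExp_ae_le_of_essSup_condE_le hS.measurableSpace_le
    (integrable_abs_sub_llim hProg hV hs (ne_top_of_le_ne_top ENNReal.ofReal_ne_top hρ)
      hS hT hsS hST hTt)
    (fun _ => abs_nonneg _) hρ0 ((essSup_condE_le_bmoRho hS hT hsS hST hTt).trans hρ)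

lemma integrable_abs_llim_sub_llim {R : Ω → ℝ} (hρ : bmoRho μ ℱ V s t ≠ ⊤)
    (hS : IsStoppingTime ℱ (fun ω => (S ω : WithTop ℝ)))
    (hR : IsStoppingTime ℱ (fun ω => (R ω : WithTop ℝ))) (hsS : ∀ ω, s ≤ S ω)
    (hSR : ∀ ω, S ω ≤ R ω) (hRt : ∀ ω, R ω ≤ t) :
    Integrable (fun ω => |llim V (R ω) ω - llim V (S ω) ω|) μ := by
  have hsR : ∀ ω, s ≤ R ω := fun ω => (hsS ω).trans (hSR ω)
  have hllim : ∀ {τ : Ω → ℝ} (hτ : IsStoppingTime ℱ (fun ω => (τ ω : WithTop ℝ))),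
      (∀ ω, s ≤ τ ω) → Measurable fun ω => llim V (τ ω) ω := fun hτ hsτ =>
    ((stronglyMeasurable_llim_stoppedValue hProg hV hτ fun ω => hs.trans (hsτ ω)).mono
      hτ.measurableSpace_le).measurable
  refine ((integrable_abs_sub_llim hProg hV hs hρ hR hR hsR (fun _ => le_rfl) hRt).add
    (integrable_abs_sub_llim hProg hV hs hρ hS hR hsS hSR hRt)).mono'
    ((hllim hR hsR).sub (hllim hS hsS)).abs.aestronglyMeasurable (Eventually.of_forall fun ω => ?_)
  rw [Real.norm_eq_abs, abs_abs, Pi.add_apply, abs_sub_comm (V (R ω) ω)]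
  exact abs_sub_le _ _ _

/-- Both `V_{R-}` and `V_{S-}` are within `ρ` of `V_R` in conditional mean. -/
lemma condExp_abs_llim_sub_llim_le {R : Ω → ℝ} {ρ : ℝ} (hρ0 : 0 ≤ ρ)
    (hρ : bmoRho μ ℱ V s t ≤ ENNReal.ofReal ρ)
    (hS : IsStoppingTime ℱ (fun ω => (S ω : WithTop ℝ)))
    (hR : IsStoppingTime ℱ (fun ω => (R ω : WithTop ℝ))) (hsS : ∀ ω, s ≤ S ω)
    (hSR : ∀ ω, S ω ≤ R ω) (hRt : ∀ ω, R ω ≤ t) :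
    μ[(fun ω => |llim V (R ω) ω - llim V (S ω) ω|)|hS.measurableSpace]
      ≤ᵐ[μ] fun _ => 2 * ρ := by
  have hρ' := ne_top_of_le_ne_top ENNReal.ofReal_ne_top hρ
  have hsR : ∀ ω, s ≤ R ω := fun ω => (hsS ω).trans (hSR ω)
  have hjump := condExp_ae_le_of_condExp_ae_le
    (hS.measurableSpace_mono hR fun ω => WithTop.coe_le_coe.2 (hSR ω)) hR.measurableSpace_le
    (condExp_abs_sub_llim_le hProg hV hs hρ0 hρ hR hR hsR (fun _ => le_rfl) hRt)
  refine (condExp_ae_le_const_add_add hS.measurableSpace_le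
    (integrable_abs_llim_sub_llim hProg hV hs hρ' hS hR hsS hSR hRt)
    (integrable_abs_sub_llim hProg hV hs hρ' hR hR hsR (fun _ => le_rfl) hRt)
    (integrable_abs_sub_llim hProg hV hs hρ' hS hR hsS hSR hRt) (a := 0) (fun ω => ?_) hjump
    (condExp_abs_sub_llim_le hProg hV hs hρ0 hρ hS hR hsS hSR hRt)).mono fun ω h => by linarith
  rw [zero_add, abs_sub_comm (V (R ω) ω)]
  exact abs_sub_le _ _ _

/-- One step of the recursion: stopping at the first grid time `R` where `V` has moved by `2ρ`
costs `2ρ` before `R`, `2ρ` for the jump `V_{R-} - V_{S-}`, and at most half of the bound `c`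
after `R`, because the weight `|V_R - V_{S-}| / 2ρ` has conditional mean at most `1/2`. -/
lemma condExp_min_gridOsc_le_of_forall {ρ : ℝ} (hρ0 : 0 < ρ)
    (hρ : bmoRho μ ℱ V s t ≤ ENNReal.ofReal ρ)
    (hT : IsStoppingTime ℱ (fun ω => (T ω : WithTop ℝ))) (hTt : ∀ ω, T ω ≤ t)
    (F : Finset ℚ) {b : ℝ} (hb : 0 ≤ b) {c : ℝ} (hc : 0 ≤ c)
    (hcR : ∀ (R : Ω → ℝ) (hR : IsStoppingTime ℱ (fun ω => (R ω : WithTop ℝ))),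
      (∀ ω, s ≤ R ω) → (∀ ω, R ω ≤ T ω) →
        μ[fun ω => min (gridOsc V F R T ω) b|hR.measurableSpace] ≤ᵐ[μ] fun _ => c)
    (hS : IsStoppingTime ℱ (fun ω => (S ω : WithTop ℝ))) (hsS : ∀ ω, s ≤ S ω)
    (hST : ∀ ω, S ω ≤ T ω) :
    μ[fun ω => min (gridOsc V F S T ω) b|hS.measurableSpace] ≤ᵐ[μ] fun _ => 4 * ρ + c / 2 := by
  have hρ' := ne_top_of_le_ne_top ENNReal.ofReal_ne_top hρ
  have hS0 : ∀ ω, 0 ≤ S ω := fun ω => hs.trans (hsS ω)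
  set R := gridHit V F (2 * ρ) S T
  have hR : IsStoppingTime ℱ (fun ω => (R ω : WithTop ℝ)) :=
    isStoppingTime_gridHit hProg hV hS hT hS0 hST F _
  have hSR : ∀ ω, S ω ≤ R ω := le_gridHit hST F _
  have hRT : ∀ ω, R ω ≤ T ω := gridHit_le F _
  have hsR : ∀ ω, s ≤ R ω := fun ω => (hsS ω).trans (hSR ω)
  have hRt : ∀ ω, R ω ≤ t := fun ω => (hRT ω).trans (hTt ω)
  set W : Ω → ℝ := fun ω => (2 * ρ)⁻¹ * |V (R ω) ω - llim V (S ω) ω|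
  have hWi : Integrable W μ :=
    (integrable_abs_sub_llim hProg hV hs hρ' hS hR hsS hSR hRt).const_mul _
  have hGR := integrable_min_gridOsc (μ := μ) hProg hV hR hT (fun ω => hs.trans (hsR ω)) hRT F hb
  have hWG : Integrable (W * fun ω => min (gridOsc V F R T ω) b) μ :=
    hWi.mul_bdd hGR.aestronglyMeasurable (Eventually.of_forall fun ω => by
      rw [Real.norm_eq_abs, abs_of_nonneg (le_min (gridOsc_nonneg F ω) hb)]
      exact min_le_right _ _)
  have hWw : μ[W|hS.measurableSpace] ≤ᵐ[μ] fun _ => (2 * ρ)⁻¹ * ρ := by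
    filter_upwards [condExp_smul (2 * ρ)⁻¹ (fun ω => |V (R ω) ω - llim V (S ω) ω|)
      hS.measurableSpace, condExp_abs_sub_llim_le hProg hV hs hρ0.le hρ hS hR hsS hSR hRt]
      with ω hsmul hω
    rw [show W = (2 * ρ)⁻¹ • fun ω => |V (R ω) ω - llim V (S ω) ω| from rfl, hsmul,
      Pi.smul_apply, smul_eq_mul]
    exact mul_le_mul_of_nonneg_left hω (by positivity)
  have hafter := condExp_mul_ae_le
    (hS.measurableSpace_mono hR fun ω => WithTop.coe_le_coe.2 (hSR ω)) hR.measurableSpace_le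
    (((measurable_abs_sub_llim hProg hV hS hR hS0 hSR).const_mul _).stronglyMeasurable)
    (fun ω => by positivity) hWi hGR hWG hc (hcR R hR hsR hRT) hWw
  refine (condExp_ae_le_const_add_add hS.measurableSpace_le
    (integrable_min_gridOsc hProg hV hS hT hS0 hST F hb) hWG
    (integrable_abs_llim_sub_llim hProg hV hs hρ' hS hR hsS hSR hRt)
    (fun ω => min_gridOsc_le hST F (by positivity) hb ω) hafter
    (condExp_abs_llim_sub_llim_le hProg hV hs hρ0.le hρ hS hR hsS hSR hRt)).mono fun ω h => ?_
  have : c * ((2 * ρ)⁻¹ * ρ) = c / 2 := by field_simp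
  linarith

lemma condExp_min_gridOsc_le {ρ : ℝ} (hρ0 : 0 < ρ) (hρ : bmoRho μ ℱ V s t ≤ ENNReal.ofReal ρ)
    (hT : IsStoppingTime ℱ (fun ω => (T ω : WithTop ℝ))) (hTt : ∀ ω, T ω ≤ t)
    (F : Finset ℚ) {b : ℝ} (hb : 0 ≤ b) (hS : IsStoppingTime ℱ (fun ω => (S ω : WithTop ℝ)))
    (hsS : ∀ ω, s ≤ S ω) (hST : ∀ ω, S ω ≤ T ω) :
    μ[fun ω => min (gridOsc V F S T ω) b|hS.measurableSpace] ≤ᵐ[μ] fun _ => 8 * ρ := by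
  -- iterating `c ↦ 4ρ + c / 2` from the trivial bound `8ρ + b` converges to `8ρ`
  have hiter : ∀ n : ℕ, ∀ (R : Ω → ℝ) (hR : IsStoppingTime ℱ (fun ω => (R ω : WithTop ℝ))),
      (∀ ω, s ≤ R ω) → (∀ ω, R ω ≤ T ω) →
        μ[fun ω => min (gridOsc V F R T ω) b|hR.measurableSpace]
          ≤ᵐ[μ] fun _ => 8 * ρ + b / 2 ^ n := by
    intro n
    induction n with
    | zero =>
      intro R hR hsR hRT
      refine condExp_ae_le_const hR.measurableSpace_le
        (integrable_min_gridOsc hProg hV hR hT (fun ω => hs.trans (hsR ω)) hRT F hb)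
        (Eventually.of_forall fun ω => ?_)
      linarith [min_le_right (gridOsc V F R T ω) b]
    | succ n ih =>
      intro R hR hsR hRT
      refine (condExp_min_gridOsc_le_of_forall hProg hV hs hρ0 hρ hT hTt F hb (by positivity)
        ih hR hsR hRT).mono fun ω h => h.trans_eq ?_
      rw [pow_succ]
      ring
  have hlim : Tendsto (fun n : ℕ => 8 * ρ + b / 2 ^ n) atTop (𝓝 (8 * ρ)) := by
    simpa using tendsto_const_nhds.add
      (tendsto_const_nhds.div_atTop (tendsto_pow_atTop_atTop_of_one_lt (one_lt_two (α := ℝ))))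
  filter_upwards [ae_all_iff.2 fun n => hiter n S hS hsS hST] with ω hω
  exact ge_of_tendsto' hlim hω

end Oscillation

def ratsUpTo (n : ℕ) : Finset ℚ := (Finset.range n).image (Denumerable.eqv ℚ).symm

lemma ratsUpTo_mono : Monotone ratsUpTo := fun _ _ h =>
  Finset.image_subset_image (Finset.range_subset_range.2 h)

lemma mem_ratsUpTo {q : ℚ} {n : ℕ} (h : Denumerable.eqv ℚ q < n) : q ∈ ratsUpTo n :=
  Finset.mem_image.2 ⟨_, Finset.mem_range.2 h, Equiv.symm_apply_apply _ q⟩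

section RunningSup

variable {Ω : Type*} {mΩ : MeasurableSpace Ω} {ℱ : Filtration ℝ mΩ} {V : ℝ → Ω → ℝ}

lemma ofReal_runningSup_sub_llim_le_iSup (hV : IsRCLL V) {S T : Ω → ℝ} {ω : Ω}
    (hS0 : 0 ≤ S ω) (hST : S ω ≤ T ω) :
    ENNReal.ofReal |runningSup V (T ω) ω - llim (runningSup V) (S ω) ω|
      ≤ ⨆ n : ℕ, ENNReal.ofReal (min (gridOsc V (ratsUpTo n) S T ω) n) := by
  set L := ⨆ n : ℕ, ENNReal.ofReal (min (gridOsc V (ratsUpTo n) S T ω) n)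
  rcases eq_or_ne L ⊤ with hL | hL
  · exact hL ▸ le_top
  have hosc : ∀ q : ℚ, |V (clip S T q ω) ω - llim V (S ω) ω| ≤ L.toReal := fun q => by
    set n := max (Denumerable.eqv ℚ q + 1) ⌈|V (clip S T q ω) ω - llim V (S ω) ω|⌉₊
    refine (ENNReal.ofReal_le_iff_le_toReal hL).1 (le_iSup_of_le n (ENNReal.ofReal_le_ofReal ?_))
    refine le_min (abs_le_gridOsc (mem_ratsUpTo (by omega)) ω) ((Nat.le_ceil _).trans ?_)
    exact_mod_cast le_max_right _ _
  have hmono : llim (runningSup V) (S ω) ω ≤ runningSup V (T ω) ω :=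
    (llim_runningSup_le_runningSup hV ω hS0).trans (monotone_runningSup hV ω hST)
  rw [abs_of_nonneg (sub_nonneg.2 hmono), ← ENNReal.ofReal_toReal hL]
  exact ENNReal.ofReal_le_ofReal (runningSup_sub_llim_le hV ω hS0 hosc)

variable [StandardBorelSpace Ω] {μ : Measure Ω} [IsFiniteMeasure μ] {s t : ℝ} {S T : Ω → ℝ}

lemma essSup_condE_runningSup_le (hProg : IsStronglyProgressive ℱ V) (hV : IsRCLL V)
    (hs : 0 ≤ s) {ρ : ℝ} (hρ0 : 0 < ρ) (hρ : bmoRho μ ℱ V s t ≤ ENNReal.ofReal ρ)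
    (hS : IsStoppingTime ℱ (fun ω => (S ω : WithTop ℝ)))
    (hT : IsStoppingTime ℱ (fun ω => (T ω : WithTop ℝ))) (hsS : ∀ ω, s ≤ S ω)
    (hST : ∀ ω, S ω ≤ T ω) (hTt : ∀ ω, T ω ≤ t) :
    essSup (condE μ hS.measurableSpace
      fun ω => |runningSup V (T ω) ω - llim (runningSup V) (S ω) ω|) μ
      ≤ ENNReal.ofReal (8 * ρ) := by
  have hS0 : ∀ ω, 0 ≤ S ω := fun ω => hs.trans (hsS ω)
  refine essSup_le_of_ae_le _ <| ae_condE_le_of_le_iSup hS.measurableSpace_le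
    (G := fun n ω => min (gridOsc V (ratsUpTo n) S T ω) n)
    (fun n => (measurable_gridOsc hProg hV hS hT hS0 hST _).min measurable_const)
    (fun n ω => le_min (gridOsc_nonneg _ ω) n.cast_nonneg)
    (fun n => ⟨n, fun ω => min_le_right _ _⟩)
    (fun _ _ h ω => min_le_min (gridOsc_mono (ratsUpTo_mono h) ω) (Nat.cast_le.2 h))
    (fun ω => ofReal_runningSup_sub_llim_le_iSup hV (hS0 ω) (hST ω))
    (fun n => condExp_min_gridOsc_le hProg hV hs hρ0 hρ hT hTt _ n.cast_nonneg hS hsS hST)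

lemma bmoRho_runningSup_le (hAd : Adapted ℱ V) (hV : IsRCLL V) (hs : 0 ≤ s) :
    bmoRho μ ℱ (runningSup V) s t ≤ 8 * bmoRho μ ℱ V s t := by
  refine ENNReal.le_of_forall_pos_le_add fun ε hε hfin => ?_
  have hfin' : bmoRho μ ℱ V s t ≠ ⊤ := fun h => by simp [h] at hfin
  set ρ := (bmoRho μ ℱ V s t).toReal + ε / 8
  have hρ0 : 0 < ρ := by positivity
  have hρ : bmoRho μ ℱ V s t ≤ ENNReal.ofReal ρ := by
    rw [← ENNReal.ofReal_toReal hfin']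
    exact ENNReal.ofReal_le_ofReal (by simp only [ρ]; linarith [hε])
  have h8 : ENNReal.ofReal (8 * ρ) ≤ 8 * bmoRho μ ℱ V s t + ε := by
    rw [show 8 * ρ = 8 * (bmoRho μ ℱ V s t).toReal + ε by simp only [ρ]; ring]
    refine ENNReal.ofReal_add_le.trans_eq ?_
    rw [ENNReal.ofReal_mul (by norm_num), ENNReal.ofReal_toReal hfin', ENNReal.ofReal_coe_nnreal]
    norm_num
  refine le_trans ?_ h8
  simp only [bmoRho, iSup_le_iff]
  intro S T hS hT hsS hST hTt
  exact essSup_condE_runningSup_le (hV.isStronglyProgressive hAd) hV hs hρ0 hρ hS hT hsS hST hTt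

end RunningSup

theorem maximal_process_bmo_general {Ω : Type*} {mΩ : MeasurableSpace Ω} [StandardBorelSpace Ω]
    (μ : Measure Ω) [IsProbabilityMeasure μ] (ℱ : Filtration ℝ mΩ)
    (τ : ℝ) (V : ℝ → Ω → ℝ) (hV : IsBMO μ ℱ τ V) :
    IsBMO μ ℱ τ (fun u ω => ⨆ r : Set.Icc (0:ℝ) u, |V (r:ℝ) ω - V 0 ω|) ∧
    ∀ s t : ℝ, 0 ≤ s → s ≤ t → t ≤ τ →
      bmoRho μ ℱ (fun u ω => ⨆ r : Set.Icc (0:ℝ) u, |V (r:ℝ) ω - V 0 ω|) s t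
        ≤ 11 * bmoRho μ ℱ V s t := by
  have hρ : ∀ s t : ℝ, 0 ≤ s → bmoRho μ ℱ (runningSup V) s t ≤ 11 * bmoRho μ ℱ V s t :=
    fun s t hs => (bmoRho_runningSup_le hV.adapted hV.rcll hs).trans (by gcongr; norm_num)
  refine ⟨⟨adapted_runningSup hV.adapted hV.rcll, isRCLL_runningSup hV.rcll, ?_⟩,
    fun s t hs _ _ => hρ s t hs⟩
  exact (hρ 0 τ le_rfl).trans_lt (ENNReal.mul_lt_top (by norm_num) hV.finite)

/-- the maximal process `V*_t = sup_{0≤s≤t} |V_s - V_0|` of a BMO process is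
again BMO, with `ρ_{s,t}(V*) ≤ 11 ρ_{s,t}(V)` for all `0 ≤ s ≤ t ≤ τ`. -/
theorem maximal_process_bmo {Ω : Type*} {mΩ : MeasurableSpace Ω} [StandardBorelSpace Ω]
    (μ : Measure Ω) [IsProbabilityMeasure μ] (ℱ : Filtration ℝ mΩ)
    (τ : ℝ) (hτ : 0 < τ) (V : ℝ → Ω → ℝ) (hV : IsBMO μ ℱ τ V) :
    IsBMO μ ℱ τ (fun u ω => ⨆ r : Set.Icc (0:ℝ) u, |V (r:ℝ) ω - V 0 ω|) ∧
    ∀ s t : ℝ, 0 ≤ s → s ≤ t → t ≤ τ →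
      bmoRho μ ℱ (fun u ω => ⨆ r : Set.Icc (0:ℝ) u, |V (r:ℝ) ω - V 0 ω|) s t
        ≤ 11 * bmoRho μ ℱ V s t :=
  maximal_process_bmo_general μ ℱ τ V hV
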